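/- For every n ≥ 1 and every l ∈ {1, …, n}, the component machine Mₙˡ of the n-bit register machine is minimal: every state of Mₙˡ is reachable from the initial state (0, 1), and any two distinct states of Mₙˡ have different behaviours. Consequently, Mₙˡ has exactly 2n states, all with pairwise distinct behaviour. -/

import Mathlib

/-- A Moore machine with input alphabet `I` and output alphabet `O`:
a finite set of states `Q`, a transition function `δ`, an output
function `o` and an initial state `q₀`. -/
structure Moore (I O : Type) where
  Q : Type
  [fin : Fintype Q]
  δ : Q → I → Q
  o : Q → O
  q₀ : Q

attribute [instance] Moore.fin

namespace Moore

variable {I O O₁ O₂ : Type}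

/-- The transition function extended to words: `δ(q, ε) = q`, `δ(q, aw) = δ(δ(q,a), w)`. -/
def run (M : Moore I O) (q : M.Q) : List I → M.Q
  | [] => q
  | a :: w => M.run (M.δ q a) w

/-- The behaviour of a state: `⟦q⟧(w) = o(δ(q, w))`. -/
def stateBeh (M : Moore I O) (q : M.Q) (w : List I) : O := M.o (M.run q w)

/-- The behaviour of a machine: `⟦M⟧ = ⟦q₀⟧`. -/
def beh (M : Moore I O) (w : List I) : O := M.stateBeh M.q₀ w

/-- The size of a machine: the number of its states. -/
def size (M : Moore I O) : ℕ := Fintype.card M.Q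

/-- A state is reachable if it is `δ(q₀, w)` for some word `w`. -/
def Reachable (M : Moore I O) (q : M.Q) : Prop := ∃ w : List I, M.run M.q₀ w = q

/-- A machine is minimal if all states are reachable and distinct states
have different behaviour. -/
def Minimal (M : Moore I O) : Prop :=
  (∀ q, M.Reachable q) ∧ ∀ q q' : M.Q, M.stateBeh q = M.stateBeh q' → q = q'

/-- The product of two Moore machines over the same input alphabet. -/
def prod (M₁ : Moore I O₁) (M₂ : Moore I O₂) : Moore I (O₁ × O₂) where
  Q := M₁.Q × M₂.Q
  δ := fun q a => (M₁.δ q.1 a, M₂.δ q.2 a)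
  o := fun q => (M₁.o q.1, M₂.o q.2)
  q₀ := (M₁.q₀, M₂.q₀)

/-- The first component of a machine with product outputs. -/
def comp₁ (M : Moore I (O₁ × O₂)) : Moore I O₁ :=
  { Q := M.Q, δ := M.δ, o := fun q => (M.o q).1, q₀ := M.q₀ }

/-- The second component of a machine with product outputs. -/
def comp₂ (M : Moore I (O₁ × O₂)) : Moore I O₂ :=
  { Q := M.Q, δ := M.δ, o := fun q => (M.o q).2, q₀ := M.q₀ }

end Moore

/-- The input alphabet of the `n`-bit register machine: move left, move right, flip. -/
inductive RegInput : Type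
  | L : RegInput
  | R : RegInput
  | F : RegInput

/-- The `n`-bit register machine `Mₙ`: states are a bit vector together with a head
position; `L`/`R` move the head (wrapping around), `F` flips the bit under the head;
the output is the bit vector. -/
def regMachine (n : ℕ) (hn : 0 < n) : Moore RegInput (Fin n → Bool) :=
  letI : NeZero n := ⟨hn.ne'⟩
  { Q := (Fin n → Bool) × Fin n
    δ := fun q i =>
      match i with
      | .L => (q.1, q.2 - 1)
      | .R => (q.1, q.2 + 1)
      | .F => (Function.update q.1 q.2 (!(q.1 q.2)), q.2)
    o := fun q => q.1
    q₀ := (fun _ => false, ⟨0, hn⟩) }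

/-- The `l`-th component machine `Mₙˡ` of the `n`-bit register machine: states are a
single bit together with a head position; `L`/`R` move the head (wrapping around),
`F` flips the bit only when the head is at position `l`; the output is the bit. -/
def regComponent (n : ℕ) (hn : 0 < n) (l : Fin n) : Moore RegInput Bool :=
  letI : NeZero n := ⟨hn.ne'⟩
  { Q := Bool × Fin n
    δ := fun q i =>
      match i with
      | .L => (q.1, q.2 - 1)
      | .R => (q.1, q.2 + 1)
      | .F => (if q.2 = l then !q.1 else q.1, q.2)
    o := fun q => q.1
    q₀ := (false, ⟨0, hn⟩) }

/-!
Moving the head right `(j - k) mod n` times takes position `k` to `j` and leaves the bit alone.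
So every state `(b, k)` is reached by walking to `l`, flipping if `b` is set, and walking to `k`;
and two states with the same bit but heads at `k ≠ k'` are told apart by walking from `k` to `l`
and flipping, which changes the output from the first state but not from the second.
-/

namespace Moore

variable {I O : Type} (M : Moore I O)

theorem run_append (q : M.Q) (u v : List I) : M.run q (u ++ v) = M.run (M.run q u) v := by
  induction u generalizing q with
  | nil => rfl
  | cons a u ih => exact ih (M.δ q a)

theorem stateBeh_append (q : M.Q) (u v : List I) :
    M.stateBeh q (u ++ v) = M.stateBeh (M.run q u) v := by
  rw [stateBeh, stateBeh, run_append]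

end Moore

section RegComponent

open RegInput Fin.NatCast

variable {n : ℕ} (hn : 0 < n) (l : Fin n)

theorem regComponent_run_F (b : Bool) (k : Fin n) :
    (regComponent n hn l).run (b, k) [F] = (if k = l then !b else b, k) := rfl

theorem regComponent_size : (regComponent n hn l).size = 2 * n := by
  change Fintype.card (Bool × Fin n) = 2 * n
  simp

variable [NeZero n]

theorem regComponent_run_replicate_R (b : Bool) (k : Fin n) (m : ℕ) :
    (regComponent n hn l).run (b, k) (List.replicate m R) = (b, k + (m : Fin n)) := by
  induction m generalizing k with
  | zero => simp only [Nat.cast_zero, add_zero]; rfl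
  | succ m ih =>
    rw [Nat.cast_succ, add_comm (m : Fin n), ← add_assoc]
    exact ih (k + 1)

theorem regComponent_run_replicate_R_sub (b : Bool) (k j : Fin n) :
    (regComponent n hn l).run (b, k) (List.replicate (j - k).val R) = (b, j) := by
  rw [regComponent_run_replicate_R, Fin.cast_val_eq_self, add_sub_cancel]

theorem regComponent_reachable (q : (regComponent n hn l).Q) :
    (regComponent n hn l).Reachable q := by
  obtain ⟨b, k⟩ := q
  refine ⟨List.replicate (l - 0).val R ++ (if b then [F] else []) ++
    List.replicate (k - l).val R, ?_⟩
  have start : (regComponent n hn l).q₀ = (false, 0) := rfl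
  rw [Moore.run_append, Moore.run_append, start, regComponent_run_replicate_R_sub]
  cases b
  · exact regComponent_run_replicate_R_sub hn l false l k
  · rw [if_pos rfl, regComponent_run_F, if_pos rfl]
    exact regComponent_run_replicate_R_sub hn l true l k

theorem regComponent_stateBeh_injective :
    Function.Injective (regComponent n hn l).stateBeh := by
  rintro ⟨b, k⟩ ⟨b', k'⟩ h
  obtain rfl : b = b' := congrFun h []
  obtain rfl : k = k' := by
    by_contra hk
    have flip := congrFun h (List.replicate (l - k).val R ++ [F])
    rw [Moore.stateBeh_append (regComponent n hn l) (b, k),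
      Moore.stateBeh_append (regComponent n hn l) (b, k'), regComponent_run_replicate_R_sub,
      regComponent_run_replicate_R, Fin.cast_val_eq_self] at flip
    have miss : k' + (l - k) ≠ l := fun h' =>
      hk ((eq_sub_of_add_eq h').trans (sub_sub_cancel l k)).symm
    simp only [Moore.stateBeh, regComponent_run_F, if_pos, if_neg miss] at flip
    exact Bool.not_ne_self b flip
  rfl

end RegComponent

/-- Each component machine `Mₙˡ` of the `n`-bit register machine is minimal, and it
has exactly `2n` states. -/
theorem regComponent_minimal (n : ℕ) (hn : 1 ≤ n) :
    ∀ l : Fin n, (regComponent n hn l).Minimal ∧ (regComponent n hn l).size = 2 * n := by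
  intro l
  have : NeZero n := ⟨Nat.one_le_iff_ne_zero.mp hn⟩
  exact ⟨⟨regComponent_reachable hn l, fun _ _ => (regComponent_stateBeh_injective hn l ·)⟩,
    regComponent_size hn l⟩
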